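/- arXiv:1601.07158 — 2 statements merged into one kernel-verified Lean document; each statement's English description precedes it below -/
import Mathlib

section
/- For every subring R of ℚ, HTP(ℚ) is Turing reducible to HTP(R). -/
open scoped Classical

/-! ### Oracle computability and Turing reducibility -/

/-- Partial functions `ℕ →. ℕ` computable relative to an oracle `O : ℕ → ℕ`.
This mirrors Mathlib's `Nat.Partrec`, with the oracle added as a generator. -/
inductive OracleRecursiveIn (O : ℕ → ℕ) : (ℕ →. ℕ) → Prop
  | oracle : OracleRecursiveIn O O
  | zero : OracleRecursiveIn O (pure 0)
  | succ : OracleRecursiveIn O Nat.succ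
  | left : OracleRecursiveIn O ↑fun n : ℕ => n.unpair.1
  | right : OracleRecursiveIn O ↑fun n : ℕ => n.unpair.2
  | pair {f g} : OracleRecursiveIn O f → OracleRecursiveIn O g →
      OracleRecursiveIn O fun n => Nat.pair <$> f n <*> g n
  | comp {f g} : OracleRecursiveIn O f → OracleRecursiveIn O g →
      OracleRecursiveIn O fun n => g n >>= f
  | prec {f g} : OracleRecursiveIn O f → OracleRecursiveIn O g →
      OracleRecursiveIn O (Nat.unpaired fun a n =>
        n.rec (f a) fun y IH => do let i ← IH; g (Nat.pair a (Nat.pair y i)))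
  | rfind {f} : OracleRecursiveIn O f →
      OracleRecursiveIn O fun a => Nat.rfind fun n => (fun m => m = 0) <$> f (Nat.pair a n)

/-- The characteristic function of a set of natural numbers. -/
noncomputable def chi (A : Set ℕ) : ℕ → ℕ := fun n => if n ∈ A then 1 else 0

/-- `A ≤ₜ B` : the set `A` is Turing reducible to the set `B`. -/
def SetTuringReducible (A B : Set ℕ) : Prop :=
  OracleRecursiveIn (chi B) (chi A)

/-- `A ≡ₜ B` : the sets `A` and `B` are Turing equivalent. -/
def SetTuringEquivalent (A B : Set ℕ) : Prop :=
  SetTuringReducible A B ∧ SetTuringReducible B A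

/-- A set of natural numbers is computably enumerable if it is empty or the
range of a computable function. -/
def CE (A : Set ℕ) : Prop :=
  A = ∅ ∨ ∃ f : ℕ → ℕ, Computable f ∧ A = Set.range f

/-! ### Subrings of `ℚ` obtained by inverting sets of primes, and `HTP` -/

/-- `ℤ[S⁻¹]` : the subring of `ℚ` generated by `ℤ` together with the inverses
of the members of `S`. -/
def invSubring (S : Set ℕ) : Subring ℚ :=
  Subring.closure {x : ℚ | ∃ p ∈ S, x = (p : ℚ)⁻¹}

/-- A code for a polynomial in the variables `X₀, X₁, X₂, …` with coefficients
in `ℚ` : a list of monomials, each given by a coefficient together with the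
(finite) list of exponents of `X₀, …, X_k`. -/
abbrev QPolyCode := List (ℚ × List ℕ)

/-- A code for a polynomial in the variables `X₀, X₁, X₂, …` with integer
coefficients. -/
abbrev PolyCode := List (ℤ × List ℕ)

/-- Evaluate a list of exponents (for the variables `X_i, X_{i+1}, …`)
at an assignment `x` of rationals to the variables. -/
def evalExps (x : ℕ → ℚ) : List ℕ → ℕ → ℚ
  | [], _ => 1
  | e :: es, i => x i ^ e * evalExps x es (i + 1)

/-- Evaluate a polynomial code with rational coefficients at an assignment of
rationals to the variables. -/
def evalQCode (f : QPolyCode) (x : ℕ → ℚ) : ℚ :=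
  (f.map fun m => m.1 * evalExps x m.2 0).sum

/-- Evaluate a polynomial code with integer coefficients at an assignment of
rationals to the variables. -/
def evalCode (f : PolyCode) (x : ℕ → ℚ) : ℚ :=
  (f.map fun m => (m.1 : ℚ) * evalExps x m.2 0).sum

/-- Hilbert's Tenth Problem for a subring `R ⊆ ℚ`: the set of natural numbers
coding (via the fixed computable bijection `Denumerable.ofNat PolyCode`) a
polynomial with integer coefficients having a root with all coordinates in
`R`. -/
def HTP (R : Subring ℚ) : Set ℕ :=
  {n | ∃ x : ℕ → ℚ, (∀ i, x i ∈ R) ∧ evalCode (Denumerable.ofNat PolyCode n) x = 0}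

/-! ### Densities -/

open Filter in
/-- The lower density of a set `S` of primes within the set of all primes. -/
noncomputable def primeLowerDensity (S : Set ℕ) : ℝ :=
  liminf (fun X : ℕ =>
    (((Finset.range (X + 1)).filter fun p => p ∈ S ∧ p.Prime).card : ℝ) /
      (((Finset.range (X + 1)).filter Nat.Prime).card : ℝ)) atTop

open Filter in
/-- The upper density of a set `S` of primes within the set of all primes. -/
noncomputable def primeUpperDensity (S : Set ℕ) : ℝ :=
  limsup (fun X : ℕ =>
    (((Finset.range (X + 1)).filter fun p => p ∈ S ∧ p.Prime).card : ℝ) /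
      (((Finset.range (X + 1)).filter Nat.Prime).card : ℝ)) atTop

open Filter in
/-- The upper density of a set `S` relative to (the set enumerated by) the
injective enumeration `q`. -/
noncomputable def relUpperDensity (q : ℕ → ℕ) (S : Set ℕ) : ℝ :=
  limsup (fun n : ℕ =>
    (((Finset.range n).filter fun i => q i ∈ S).card : ℝ) / (n : ℝ)) atTop

open Filter in
/-- The lower density of a set `S` relative to (the set enumerated by) the
injective enumeration `q`. -/
noncomputable def relLowerDensity (q : ℕ → ℕ) (S : Set ℕ) : ℝ :=
  liminf (fun n : ℕ =>
    (((Finset.range n).filter fun i => q i ∈ S).card : ℝ) / (n : ℝ)) atTop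

/-!
If `p(x) = 0` with `x ∈ ℚᵏ`, let `d` be a common denominator of the `xᵢ` and write
`d = 1 + a² + b² + c² + e²` by Lagrange's four-square theorem. With
`B = 1 + Y₁² + Y₂² + Y₃² + Y₄²` and `D ≥ deg p`, the polynomial `B ^ D · p(X / B)` then has the
integer root `(d x, a, b, c, e)`. Conversely `B > 0` on `ℚ`, so any root `(z, w)` of it in `R`
gives the rational root `z / B(w)` of `p`. The map `p ↦ B ^ D · p(X / B)` is primitive recursive
on codes, so `HTP(ℚ)` is even many-one reducible to `HTP(R)`.
-/

theorem OracleRecursiveIn.of_partrec (O : ℕ → ℕ) {f : ℕ →. ℕ} (h : Nat.Partrec f) :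
    OracleRecursiveIn O f := by
  induction h with
  | zero => exact .zero
  | succ => exact .succ
  | left => exact .left
  | right => exact .right
  | pair _ _ ihf ihg => exact .pair ihf ihg
  | comp _ _ ihf ihg => exact .comp ihf ihg
  | prec _ _ ihf ihg => exact .prec ihf ihg
  | rfind _ ihf => exact .rfind ihf

theorem SetTuringReducible.of_manyOneReducible {A B : Set ℕ}
    (h : ManyOneReducible (· ∈ A) (· ∈ B)) : SetTuringReducible A B := by
  obtain ⟨g, hg, hAB⟩ := h
  have hchi : (↑(chi A) : ℕ →. ℕ) = fun n => (↑g : ℕ →. ℕ) n >>= (↑(chi B) : ℕ →. ℕ) := by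
    funext n
    simp only [PFun.coe_val, chi, hAB]
    exact (Part.bind_some _ _).symm
  rw [SetTuringReducible, hchi]
  exact .comp .oracle (.of_partrec _ (Partrec.nat_iff.1 hg))

/-- The exponents of the product of two monomials. -/
def addExps (a b : List ℕ) : List ℕ :=
  (List.range (max a.length b.length)).map fun i => a.getD i 0 + b.getD i 0

/-- A list of exponent lists encodes the sum of the corresponding monomials. -/
def evalMonos (p : List (List ℕ)) (x : ℕ → ℚ) : ℚ :=
  (p.map fun e => evalExps x e 0).sum

def mulMonos (p q : List (List ℕ)) : List (List ℕ) :=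
  p.flatMap fun a => q.map (addExps a)

def powMonos (p : List (List ℕ)) (n : ℕ) : List (List ℕ) :=
  (mulMonos p)^[n] [[]]

/-- The polynomial `1 + X_k² + X_{k+1}² + X_{k+2}² + X_{k+3}²`. -/
def onePlusFourSquares (k : ℕ) : List (List ℕ) :=
  [] :: (List.range 4).map fun j => List.replicate (k + j) 0 ++ [2]

/-- `B ^ D · p(X₀ / B, …, X_{k-1} / B)` with `B = onePlusFourSquares k`; this is a polynomial
when `p` only involves `X₀, …, X_{k-1}` and has degree at most `D`. -/
def homogenizeWith (p : PolyCode) (k D : ℕ) : PolyCode :=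
  p.flatMap fun m =>
    (powMonos (onePlusFourSquares k) (D - m.2.sum)).map fun e => (m.1, addExps m.2 e)

def numVarsBound (p : PolyCode) : ℕ := (p.map fun m => m.2.length).sum

def degreeBound (p : PolyCode) : ℕ := (p.map fun m => m.2.sum).sum

def homogenize (p : PolyCode) : PolyCode := homogenizeWith p (numVarsBound p) (degreeBound p)

section Evaluation

variable (x : ℕ → ℚ)

theorem evalExps_eq_prod_range {l : List ℕ} {n : ℕ} (h : l.length ≤ n) (i : ℕ) :
    evalExps x l i = ∏ j ∈ Finset.range n, x (i + j) ^ l.getD j 0 := by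
  induction l generalizing i n with
  | nil => simp [evalExps]
  | cons e es ih =>
    obtain ⟨n, rfl⟩ := Nat.exists_eq_add_one.2 (Nat.lt_of_lt_of_le (Nat.succ_pos _) h)
    rw [Finset.prod_range_succ', evalExps, ih (by simpa using h) (i + 1), mul_comm]
    simp only [List.getD_cons_succ, List.getD_cons_zero, add_zero, add_assoc, add_comm 1]

theorem addExps_getD (a b : List ℕ) (j : ℕ) :
    (addExps a b).getD j 0 = a.getD j 0 + b.getD j 0 := by
  by_cases hj : j < max a.length b.length
  · rw [addExps, List.getD_eq_getElem _ _ (by simpa using hj)]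
    simp
  · rw [List.getD_eq_default _ _ (by simp [addExps]; omega),
      List.getD_eq_default _ _ (by omega), List.getD_eq_default _ _ (by omega)]

theorem evalExps_addExps (a b : List ℕ) (i : ℕ) :
    evalExps x (addExps a b) i = evalExps x a i * evalExps x b i := by
  have hlen : (addExps a b).length = max a.length b.length := by simp [addExps]
  rw [evalExps_eq_prod_range x hlen.le, evalExps_eq_prod_range x (le_max_left _ _),
    evalExps_eq_prod_range x (le_max_right _ _), ← Finset.prod_mul_distrib]
  simp only [addExps_getD, pow_add]

theorem evalMonos_mulMonos (p q : List (List ℕ)) :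
    evalMonos (mulMonos p q) x = evalMonos p x * evalMonos q x := by
  induction p with
  | nil => simp [evalMonos, mulMonos]
  | cons a p ih =>
    simp only [evalMonos, mulMonos, List.flatMap_cons, List.map_append, List.sum_append,
      List.map_map, Function.comp_def, evalExps_addExps, List.sum_map_mul_left,
      List.map_cons, List.sum_cons, add_mul] at ih ⊢
    rw [ih]

theorem evalMonos_powMonos (p : List (List ℕ)) (n : ℕ) :
    evalMonos (powMonos p n) x = evalMonos p x ^ n := by
  induction n with
  | zero => simp [powMonos, evalMonos, evalExps]
  | succ n ih =>
    rw [powMonos, Function.iterate_succ_apply', evalMonos_mulMonos, ← powMonos, ih, pow_succ']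

theorem evalExps_replicate_zero_append (m i : ℕ) :
    evalExps x (List.replicate m 0 ++ [2]) i = x (i + m) ^ 2 := by
  induction m generalizing i with
  | zero => simp [evalExps]
  | succ m ih =>
    rw [List.replicate_succ, List.cons_append, evalExps, ih, add_right_comm, add_assoc]
    simp

theorem evalMonos_onePlusFourSquares (k : ℕ) :
    evalMonos (onePlusFourSquares k) x
      = 1 + x k ^ 2 + x (k + 1) ^ 2 + x (k + 2) ^ 2 + x (k + 3) ^ 2 := by
  simp only [evalMonos, onePlusFourSquares, List.range_succ, List.range_zero, List.nil_append,
    List.cons_append, List.map_cons, add_zero, List.map_nil, evalExps,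
    evalExps_replicate_zero_append, zero_add, List.sum_cons, List.sum_nil]
  ring

theorem evalExps_of_eq_mul {z : ℕ → ℚ} {b : ℚ} :
    ∀ (e : List ℕ) (i : ℕ), (∀ j < e.length, z (i + j) = b * x (i + j)) →
      evalExps z e i = b ^ e.sum * evalExps x e i
  | [], _, _ => by simp [evalExps]
  | n :: e, i, hz => by
    have hzi : z i = b * x i := by simpa using hz 0 (by simp)
    have hze : ∀ j < e.length, z (i + 1 + j) = b * x (i + 1 + j) := fun j hj => by
      simpa [add_assoc, add_comm 1] using hz (j + 1) (by simpa using hj)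
    rw [evalExps, evalExps, evalExps_of_eq_mul e (i + 1) hze, hzi, List.sum_cons]
    ring

theorem evalCode_flatMap (p : PolyCode) (f : ℤ × List ℕ → PolyCode) :
    evalCode (p.flatMap f) x = (p.map fun m => evalCode (f m) x).sum := by
  induction p with
  | nil => simp [evalCode]
  | cons m p ih => simp only [evalCode, List.flatMap_cons, List.map_append, List.sum_append,
      List.map_cons, List.sum_cons] at ih ⊢; rw [ih]

theorem evalCode_homogenizeWith {p : PolyCode} {k D : ℕ} {z : ℕ → ℚ} {b : ℚ}
    (hk : ∀ m ∈ p, m.2.length ≤ k) (hD : ∀ m ∈ p, m.2.sum ≤ D)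
    (hz : ∀ i < k, z i = b * x i) (hb : evalMonos (onePlusFourSquares k) z = b) :
    evalCode (homogenizeWith p k D) z = b ^ D * evalCode p x := by
  rw [homogenizeWith, evalCode_flatMap, evalCode, ← List.sum_map_mul_left]
  refine congrArg List.sum (List.map_congr_left fun m hm => ?_)
  have hmz : evalExps z m.2 0 = b ^ m.2.sum * evalExps x m.2 0 :=
    evalExps_of_eq_mul x m.2 0 fun j hj => hz _ (by have := hk m hm; omega)
  have hpow :
      evalMonos (powMonos (onePlusFourSquares k) (D - m.2.sum)) z = b ^ (D - m.2.sum) := by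
    rw [evalMonos_powMonos, hb]
  simp only [evalMonos] at hpow
  simp only [evalCode, List.map_map, Function.comp_def, evalExps_addExps, mul_assoc,
    List.sum_map_mul_left, hpow, hmz]
  rw [← pow_sub_mul_pow b (hD m hm)]
  ring

end Evaluation

section Primrec

theorem primrec_addExps : Primrec₂ addExps :=
  Primrec.list_map
    (Primrec.list_range.comp (Primrec.nat_max.comp
      (Primrec.list_length.comp .fst) (Primrec.list_length.comp .snd)))
    ((Primrec.nat_add.comp
      ((Primrec.list_getD 0).comp (Primrec.fst.comp .fst) .snd)
      ((Primrec.list_getD 0).comp (Primrec.snd.comp .fst) .snd)).to₂)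

theorem primrec_mulMonos : Primrec₂ mulMonos :=
  Primrec.list_flatMap .fst
    (Primrec.list_map (Primrec.snd.comp .fst)
      ((primrec_addExps.comp (Primrec.snd.comp .fst) .snd).to₂))

theorem primrec_powMonos : Primrec₂ powMonos :=
  Primrec.nat_iterate .snd (Primrec.const _)
    ((primrec_mulMonos.comp (Primrec.fst.comp .fst) .snd).to₂)

theorem primrec_onePlusFourSquares : Primrec onePlusFourSquares := by
  have h : Primrec fun k : ℕ =>
      ([] : List ℕ) :: (List.range 4).map fun j => ((List.range (k + j)).map fun _ => 0) ++ [2] :=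
    Primrec.list_cons.comp (Primrec.const []) <|
      Primrec.list_map (Primrec.const _) <|
        (Primrec.list_append.comp
          (Primrec.list_map (Primrec.list_range.comp (Primrec.nat_add.comp .fst .snd))
            (Primrec.const 0).to₂)
          (Primrec.const _)).to₂
  exact h.of_eq fun k => by simp [onePlusFourSquares, List.map_const']

theorem primrec_list_sum_nat : Primrec (List.sum : List ℕ → ℕ) :=
  (Primrec.list_foldr .id (Primrec.const 0)
    ((Primrec.nat_add.comp (Primrec.fst.comp .snd) (Primrec.snd.comp .snd)).to₂)).of_eq
    fun l => (List.sum_eq_foldr (l := l)).symm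

theorem primrec_numVarsBound : Primrec numVarsBound :=
  primrec_list_sum_nat.comp <|
    Primrec.list_map .id ((Primrec.list_length.comp (Primrec.snd.comp .snd)).to₂)

theorem primrec_degreeBound : Primrec degreeBound :=
  primrec_list_sum_nat.comp <|
    Primrec.list_map .id ((primrec_list_sum_nat.comp (Primrec.snd.comp .snd)).to₂)

theorem primrec_homogenize : Primrec homogenize :=
  Primrec.list_flatMap .id <| Primrec.list_map
    (primrec_powMonos.comp (primrec_onePlusFourSquares.comp (primrec_numVarsBound.comp .fst))
      (Primrec.nat_sub.comp (primrec_degreeBound.comp .fst)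
        (primrec_list_sum_nat.comp (Primrec.snd.comp .snd))))
    ((Primrec.pair (Primrec.fst.comp (Primrec.snd.comp .fst))
      (primrec_addExps.comp (Primrec.snd.comp (Primrec.snd.comp .fst)) .snd)).to₂)

end Primrec

theorem le_numVarsBound {p : PolyCode} {m : ℤ × List ℕ} (hm : m ∈ p) :
    m.2.length ≤ numVarsBound p :=
  List.le_sum_of_mem (List.mem_map_of_mem hm)

theorem le_degreeBound {p : PolyCode} {m : ℤ × List ℕ} (hm : m ∈ p) :
    m.2.sum ≤ degreeBound p :=
  List.le_sum_of_mem (List.mem_map_of_mem hm)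

theorem exists_pos_nat_mul_eq_intCast (x : ℕ → ℚ) (k : ℕ) :
    ∃ d : ℕ, 0 < d ∧ ∀ i < k, ∃ n : ℤ, (d : ℚ) * x i = n := by
  refine ⟨∏ i ∈ Finset.range k, (x i).den, Finset.prod_pos fun i _ => (x i).pos, fun i hi => ?_⟩
  obtain ⟨t, ht⟩ := Finset.dvd_prod_of_mem (fun j => (x j).den) (Finset.mem_range.2 hi)
  refine ⟨t * (x i).num, ?_⟩
  rw [ht]
  push_cast
  rw [mul_comm ((x i).den : ℚ), mul_assoc, Rat.den_mul_eq_num]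

theorem exists_intCast_root_homogenize {p : PolyCode} {x : ℕ → ℚ} (hx : evalCode p x = 0) :
    ∃ z : ℕ → ℤ, evalCode (homogenize p) (fun i => z i) = 0 := by
  set k := numVarsBound p
  obtain ⟨d, hd, hdx⟩ := exists_pos_nat_mul_eq_intCast x k
  choose! y hy using hdx
  obtain ⟨a, b, c, e, habce⟩ := Nat.sum_four_squares (d - 1)
  let z : ℕ → ℤ := fun i => if i < k then y i else [(a : ℤ), b, c, e].getD (i - k) 0
  have hz : ∀ i < k, (z i : ℚ) = d * x i := fun i hi => by simp [z, hi, hy i hi]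
  have hB : evalMonos (onePlusFourSquares k) (fun i => (z i : ℚ)) = d := by
    have hsq : 1 + a ^ 2 + b ^ 2 + c ^ 2 + e ^ 2 = d := by omega
    simpa [z, evalMonos_onePlusFourSquares] using congrArg (Nat.cast : ℕ → ℚ) hsq
  refine ⟨z, ?_⟩
  rw [homogenize, evalCode_homogenizeWith x (fun _ => le_numVarsBound) (fun _ => le_degreeBound)
    hz hB, hx, mul_zero]

theorem evalCode_eq_zero_of_homogenize {p : PolyCode} {z : ℕ → ℚ}
    (hz : evalCode (homogenize p) z = 0) :
    evalCode p (fun i => z i / evalMonos (onePlusFourSquares (numVarsBound p)) z) = 0 := by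
  set b := evalMonos (onePlusFourSquares (numVarsBound p)) z with hb
  have hb0 : b ≠ 0 := by rw [hb, evalMonos_onePlusFourSquares]; positivity
  rw [homogenize, evalCode_homogenizeWith _ (fun _ => le_numVarsBound) (fun _ => le_degreeBound)
    (fun i _ => (mul_div_cancel₀ (z i) hb0).symm) hb.symm] at hz
  exact (mul_eq_zero.1 hz).resolve_left (pow_ne_zero _ hb0)

/-- For every subring `R` of `ℚ`, `HTP(ℚ) ≤ₜ HTP(R)`. -/
theorem stmt10 (R : Subring ℚ) : SetTuringReducible (HTP ⊤) (HTP R) := by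
  refine .of_manyOneReducible
    ⟨fun n => Encodable.encode (homogenize (Denumerable.ofNat PolyCode n)),
      (Primrec.encode.comp (primrec_homogenize.comp (Primrec.ofNat _))).to_comp, fun n => ?_⟩
  simp only [HTP, Set.mem_ofPred_eq, Denumerable.ofNat_encode]
  constructor
  · rintro ⟨x, -, hx⟩
    obtain ⟨z, hz⟩ := exists_intCast_root_homogenize hx
    exact ⟨fun i => z i, fun i => intCast_mem R (z i), hz⟩
  · rintro ⟨z, -, hz⟩
    exact ⟨_, fun i => Subring.mem_top _, evalCode_eq_zero_of_homogenize hz⟩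
end

section
/- Let R be any subring of ℚ, let m be a positive integer, and let A ⊆ ℚ^m be a set that is diophantine over ℚ. Then A ∩ R^m is diophantine over R. -/
open scoped Classical

/-! ### Oracle computability and Turing reducibility -/

/-- Partial functions `ℕ →. ℕ` computable relative to an oracle `O : ℕ → ℕ`.
This mirrors Mathlib's `Nat.Partrec`, with the oracle added as a generator. -/
inductive RecursiveInOracle (O : ℕ → ℕ) : (ℕ →. ℕ) → Prop
  | oracle : RecursiveInOracle O O
  | zero : RecursiveInOracle O (pure 0)
  | succ : RecursiveInOracle O Nat.succ
  | left : RecursiveInOracle O ↑fun n : ℕ => n.unpair.1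
  | right : RecursiveInOracle O ↑fun n : ℕ => n.unpair.2
  | pair {f g} : RecursiveInOracle O f → RecursiveInOracle O g →
      RecursiveInOracle O fun n => Nat.pair <$> f n <*> g n
  | comp {f g} : RecursiveInOracle O f → RecursiveInOracle O g →
      RecursiveInOracle O fun n => g n >>= f
  | prec {f g} : RecursiveInOracle O f → RecursiveInOracle O g →
      RecursiveInOracle O (Nat.unpaired fun a n =>
        n.rec (f a) fun y IH => do let i ← IH; g (Nat.pair a (Nat.pair y i)))
  | rfind {f} : RecursiveInOracle O f →
      RecursiveInOracle O fun a => Nat.rfind fun n => (fun m => m = 0) <$> f (Nat.pair a n)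

/-- `A ≤ₜ B` : the set `A` is Turing reducible to the set `B`. -/
def TuringReducibleSet (A B : Set ℕ) : Prop :=
  RecursiveInOracle (chi B) (chi A)

/-- `A ≡ₜ B` : the sets `A` and `B` are Turing equivalent. -/
def TuringEquivalentSet (A B : Set ℕ) : Prop :=
  TuringReducibleSet A B ∧ TuringReducibleSet B A

/-- A subset `A ⊆ R^k` is diophantine over the commutative ring `R` if there
are `n` and a polynomial `f` in `k + n` variables with coefficients in `R`
such that `A = {t | ∃ x ∈ R^n, f(t, x) = 0}`. -/
def DiophOver (R : Type*) [CommRing R] {k : ℕ} (A : Set (Fin k → R)) : Prop :=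
  ∃ (n : ℕ) (f : MvPolynomial (Fin k ⊕ Fin n) R),
    A = {t | ∃ x : Fin n → R, MvPolynomial.eval (Sum.elim t x) f = 0}

/-! Every rational number is `a / (1 + c₁² + c₂² + c₃² + c₄²)` with `a, cᵢ ∈ ℤ` (apply Lagrange's
four-square theorem to the denominator minus one), and every such quotient with `a, cᵢ ∈ R` is
rational because the denominator never vanishes. So the rational witnesses of `A` can be traded
for witnesses `a, c` in `R`. The condition `f(t, a / (1 + Σ cᵢ²)) = 0` becomes polynomial after
homogenizing `f` in the witness variables, with `1 + Σ cᵢ²` in the role of the homogenizing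
variable, and its coefficients land in `R` after multiplying by a common denominator. -/

open MvPolynomial

theorem DiophOver.of_fintype {R : Type*} [CommRing R] {k : ℕ} {τ : Type*} [Fintype τ]
    {A : Set (Fin k → R)} (F : MvPolynomial (Fin k ⊕ τ) R)
    (hA : A = {t | ∃ v : τ → R, eval (Sum.elim t v) F = 0}) : DiophOver R A := by
  let e := Fintype.equivFin τ
  refine ⟨Fintype.card τ, rename (Sum.map id e) F, hA.trans (Set.ext fun t => ?_)⟩
  simp only [eval_rename, Sum.elim_comp_map, Function.comp_id]
  exact (e.arrowCongr (.refl R)).symm.surjective.exists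

theorem MvPolynomial.exists_eval_smul_eq_pow_mul_eval {K : Type*} [CommRing K] {σ τ ρ : Type*}
    (d : MvPolynomial ρ K) (f : MvPolynomial (σ ⊕ τ) K) :
    ∃ (N : ℕ) (h : MvPolynomial (σ ⊕ (τ ⊕ ρ)) K), ∀ t x c,
      eval (Sum.elim t (Sum.elim (eval c d • x) c)) h = eval c d ^ N * eval (Sum.elim t x) f := by
  let D : MvPolynomial (σ ⊕ (τ ⊕ ρ)) K := rename (Sum.inr ∘ Sum.inr) d
  have hD : ∀ t y c, eval (Sum.elim t (Sum.elim y c)) D = eval c d := by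
    intro t y c; simp only [D, eval_rename]; rfl
  induction f using MvPolynomial.induction_on with
  | C a => exact ⟨0, C a, by simp⟩
  | add p q hp hq =>
    obtain ⟨N₁, h₁, e₁⟩ := hp
    obtain ⟨N₂, h₂, e₂⟩ := hq
    refine ⟨N₁ + N₂, D ^ N₂ * h₁ + D ^ N₁ * h₂, fun t x c => ?_⟩
    simp only [map_add, map_mul, map_pow, hD, e₁, e₂]
    ring
  | mul_X p i hp =>
    obtain ⟨N, h, e⟩ := hp
    rcases i with i | j
    · exact ⟨N, h * X (Sum.inl i), fun t x c => by simp [e, mul_assoc]⟩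
    · refine ⟨N + 1, h * X (Sum.inr (Sum.inl j)), fun t x c => ?_⟩
      simp only [map_mul, eval_X, e, Sum.elim_inl, Sum.elim_inr, Pi.smul_apply, smul_eq_mul]
      ring

theorem Subring.exists_map_subtype_eq_natCast_mul {ι : Type*} (R : Subring ℚ)
    (g : MvPolynomial ι ℚ) :
    ∃ k : ℕ, 0 < k ∧ ∃ G : MvPolynomial ι R, MvPolynomial.map R.subtype G = C (k : ℚ) * g := by
  induction g using MvPolynomial.induction_on with
  | C q =>
    refine ⟨q.den, q.den_pos, C ⟨q.num, intCast_mem R _⟩, ?_⟩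
    rw [map_C, ← map_mul, mul_comm, Rat.mul_den_eq_num]
    rfl
  | add p q hp hq =>
    obtain ⟨k₁, hk₁, G₁, e₁⟩ := hp
    obtain ⟨k₂, hk₂, G₂, e₂⟩ := hq
    refine ⟨k₁ * k₂, by positivity, C (k₂ : R) * G₁ + C (k₁ : R) * G₂, ?_⟩
    simp only [map_add, map_mul, map_natCast, e₁, e₂, Nat.cast_mul]
    ring
  | mul_X p i hp =>
    obtain ⟨k, hk, G, e⟩ := hp
    exact ⟨k, hk, G * X i, by rw [map_mul, map_X, e, mul_assoc]⟩

theorem exists_int_eq_div_one_add_sum_sq {ι : Type*} [Fintype ι] (x : ι → ℚ) :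
    ∃ (a : ι → ℤ) (c : Fin 4 → ℕ), x = fun j => a j / (1 + ∑ i, (c i : ℚ) ^ 2) := by
  obtain ⟨w₀, w₁, w₂, w₃, hw⟩ := Nat.sum_four_squares (∏ j, (x j).den - 1)
  have hden : 1 + ∑ i, ((![w₀, w₁, w₂, w₃] i : ℕ) : ℚ) ^ 2 = ∏ j, ((x j).den : ℚ) := by
    have hpos : 1 ≤ ∏ j, (x j).den := Finset.prod_pos fun j _ => (x j).den_pos
    simp only [Fin.sum_univ_four, Matrix.cons_val]
    exact_mod_cast (by omega : 1 + (w₀ ^ 2 + w₁ ^ 2 + w₂ ^ 2 + w₃ ^ 2) = ∏ j, (x j).den)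
  refine ⟨fun j => (x j).num * ∏ l ∈ Finset.univ.erase j, ((x l).den : ℤ), ![w₀, w₁, w₂, w₃],
    funext fun j => ?_⟩
  rw [hden, ← Finset.mul_prod_erase _ _ (Finset.mem_univ j)]
  push_cast
  rw [← Rat.mul_den_eq_num]
  field_simp

theorem Subring.exists_eval_eq_zero_iff_eval_div_one_add_sum_sq (R : Subring ℚ) {σ τ : Type*}
    (f : MvPolynomial (σ ⊕ τ) ℚ) :
    ∃ G : MvPolynomial (σ ⊕ (τ ⊕ Fin 4)) R, ∀ (t : σ → R) (v : τ ⊕ Fin 4 → R),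
      eval (Sum.elim t v) G = 0 ↔ eval (Sum.elim (fun i => (t i : ℚ))
        (fun j => v (.inl j) / (1 + ∑ i, (v (.inr i) : ℚ) ^ 2))) f = 0 := by
  obtain ⟨N, h, hh⟩ := exists_eval_smul_eq_pow_mul_eval (1 + ∑ i : Fin 4, X i ^ 2) f
  obtain ⟨k, hk, G, hG⟩ := R.exists_map_subtype_eq_natCast_mul h
  refine ⟨G, fun t v => ?_⟩
  set D : ℚ := 1 + ∑ i, (v (.inr i) : ℚ) ^ 2
  have hD : 0 < D := by positivity
  have hD_eval : eval (fun i => (v (.inr i) : ℚ)) (1 + ∑ i, X i ^ 2) = D := by simp [D]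
  have hv : R.subtype ∘ Sum.elim t v = Sum.elim (fun i => (t i : ℚ))
      (Sum.elim (D • fun j => v (.inl j) / D) fun i => v (.inr i)) := by
    ext (i | j | i)
    · rfl
    · exact (mul_div_cancel₀ _ hD.ne').symm
    · rfl
  have key : (eval (Sum.elim t v) G : ℚ) = k * (D ^ N * eval (Sum.elim (fun i => (t i : ℚ))
      (fun j => v (.inl j) / D)) f) := by
    rw [← R.coe_subtype, eval₂_comp, ← eval_map, hG, map_mul, eval_C, hv, ← hD_eval, hh, hD_eval]
    rfl
  rw [← Subring.coe_eq_zero_iff, key]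
  simp [hk.ne', hD.ne']

theorem stmt11_general (R : Subring ℚ) (m : ℕ) (A : Set (Fin m → ℚ))
    (hA : DiophOver ℚ A) :
    DiophOver R {t : Fin m → R | (fun i => (t i : ℚ)) ∈ A} := by
  obtain ⟨n, f, rfl⟩ := hA
  obtain ⟨G, hG⟩ := R.exists_eval_eq_zero_iff_eval_div_one_add_sum_sq f
  refine .of_fintype G (Set.ext fun t => ⟨?_, ?_⟩)
  · rintro ⟨x, hx⟩
    obtain ⟨a, c, rfl⟩ := exists_int_eq_div_one_add_sum_sq x
    exact ⟨Sum.elim (fun j => a j) (fun i => c i), (hG _ _).2 (by simpa using hx)⟩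
  · rintro ⟨v, hv⟩
    exact ⟨_, (hG t v).1 hv⟩

/-- Let `R` be any subring of `ℚ`, `m` a positive integer,
and `A ⊆ ℚ^m` diophantine over `ℚ`. Then `A ∩ R^m` is diophantine over `R`. -/
theorem stmt11 (R : Subring ℚ) (m : ℕ) (hm : 0 < m) (A : Set (Fin m → ℚ))
    (hA : DiophOver ℚ A) :
    DiophOver R {t : Fin m → R | (fun i => (t i : ℚ)) ∈ A} :=
  stmt11_general R m A hA
end
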